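/- Let x⁰, x¹, … be a PPA sequence for min_{x∈Ω} q(x) with inf_{x∈Ω} q(x) > −∞, and let x̄ be an accumulation point of (x^k) which is a KKT point at which the strict complementarity conditions hold (so x^k → x̄). Let S = A_m(x̄) = {j : l_j < x̄_j < u_j}, assume Q_{SS} has at least one positive eigenvalue, let λ₊ be its smallest positive eigenvalue, and set ρ̄ = γ/(γ + λ₊) ∈ (0,1). Then there exists N such that for all k ≥ N: q(x^k) − q(x̄) ≤ (‖Q_{SS}‖ · ρ̄^{2(k−N)} / (2(1−ρ̄)²)) · ‖x^N − x^{N+1}‖², where ‖Q_{SS}‖ is the spectral (operator) norm of Q_{SS}. (Theorem 3.8, part (ii).) -/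

import Mathlib

open Matrix Filter Topology

/-- Euclidean norm of a finitely-indexed real vector. -/
noncomputable def vnorm {ι : Type*} [Fintype ι] (v : ι → ℝ) : ℝ :=
  Real.sqrt (v ⬝ᵥ v)

/-- Membership in the (possibly unbounded) box `Ω = {x | l ≤ x ≤ u}`,
with extended-real bounds. -/
def inBox {n : ℕ} (l u : Fin n → EReal) (x : Fin n → ℝ) : Prop :=
  ∀ j, l j ≤ (x j : EReal) ∧ (x j : EReal) ≤ u j

/-- The quadratic objective `q(x) = ½ xᵀQx + rᵀx`. -/
noncomputable def qf {n : ℕ} (Q : Matrix (Fin n) (Fin n) ℝ) (r : Fin n → ℝ)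
    (x : Fin n → ℝ) : ℝ :=
  (1 / 2) * (x ⬝ᵥ Q *ᵥ x) + r ⬝ᵥ x

/-- `xbar` is a KKT point at which the strict complementarity conditions hold. -/
def kktStrict {n : ℕ} (l u : Fin n → EReal) (Q : Matrix (Fin n) (Fin n) ℝ)
    (r : Fin n → ℝ) (xbar : Fin n → ℝ) : Prop :=
  ∀ j, ((xbar j : EReal) = l j → 0 < (Q *ᵥ xbar + r) j) ∧
    (l j < (xbar j : EReal) ∧ (xbar j : EReal) < u j → (Q *ᵥ xbar + r) j = 0) ∧
    ((xbar j : EReal) = u j → (Q *ᵥ xbar + r) j < 0)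

section auxlemmas
set_option linter.unusedSectionVars false
set_option linter.unusedVariables false

section aux
variable {n : ℕ}

lemma dot_self_nonneg (v : Fin n → ℝ) : 0 ≤ v ⬝ᵥ v :=
  Finset.sum_nonneg fun i _ => mul_self_nonneg _

lemma vnorm_sq (v : Fin n → ℝ) : vnorm v ^ 2 = v ⬝ᵥ v := by
  rw [vnorm, Real.sq_sqrt (dot_self_nonneg v)]

lemma vnorm_zero : vnorm (0 : Fin n → ℝ) = 0 := by
  simp [vnorm, dotProduct]

lemma vnorm_nonneg (v : Fin n → ℝ) : 0 ≤ vnorm v := Real.sqrt_nonneg _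

lemma symm_dot {Q : Matrix (Fin n) (Fin n) ℝ} (hQ : Q.IsSymm) (a v : Fin n → ℝ) :
    a ⬝ᵥ Q *ᵥ v = v ⬝ᵥ Q *ᵥ a := by
  rw [dotProduct_mulVec, ← vecMul_transpose, hQ.eq, dotProduct_comm]

lemma qf_add {Q : Matrix (Fin n) (Fin n) ℝ} (hQ : Q.IsSymm) (r : Fin n → ℝ)
    (a v : Fin n → ℝ) :
    qf Q r (a + v) = qf Q r a + (Q *ᵥ a + r) ⬝ᵥ v + (1 / 2) * (v ⬝ᵥ Q *ᵥ v) := by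
  simp only [qf, mulVec_add, dotProduct_add, add_dotProduct]
  have h := symm_dot hQ a v
  have h2 : v ⬝ᵥ Q *ᵥ a = (Q *ᵥ a) ⬝ᵥ v := dotProduct_comm _ _
  ring_nf
  rw [h] at *
  ring_nf
  rw [h2]
  ring

lemma prox_diff {Q : Matrix (Fin n) (Fin n) ℝ} (hQ : Q.IsSymm) (r : Fin n → ℝ)
    (γ : ℝ) (xk y z : Fin n → ℝ) :
    (qf Q r z + γ / 2 * vnorm (z - xk) ^ 2) - (qf Q r y + γ / 2 * vnorm (y - xk) ^ 2) =
      (Q *ᵥ y + r + γ • (y - xk)) ⬝ᵥ (z - y) +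
        (1 / 2) * ((z - y) ⬝ᵥ (Q + γ • (1 : Matrix (Fin n) (Fin n) ℝ)) *ᵥ (z - y)) := by
  have hz : z = y + (z - y) := by ring_nf
  rw [vnorm_sq, vnorm_sq]
  nth_rewrite 1 [hz]
  rw [qf_add hQ r y (z - y)]
  have hzz : z - xk = (y - xk) + (z - y) := by abel
  rw [hzz]
  simp only [dotProduct_add, add_dotProduct, add_mulVec, smul_mulVec, one_mulVec,
    dotProduct_smul, smul_dotProduct, smul_eq_mul]
  have h3 : (y - xk) ⬝ᵥ (z - y) = (z - y) ⬝ᵥ (y - xk) := dotProduct_comm _ _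
  ring_nf
  rw [h3]
  ring

lemma qf_continuous (Q : Matrix (Fin n) (Fin n) ℝ) (r : Fin n → ℝ) :
    Continuous (qf Q r) := by
  have : qf Q r = fun x => (1/2) * ∑ j, x j * ∑ j', Q j j' * x j' + ∑ j, r j * x j := rfl
  rw [this]
  apply Continuous.add
  · apply continuous_const.mul
    apply continuous_finset_sum
    intro j _
    exact (continuous_apply j).mul
      (continuous_finset_sum _ fun j' _ => continuous_const.mul (continuous_apply j'))
  · exact continuous_finset_sum _ fun j _ => continuous_const.mul (continuous_apply j)

end aux

section ext
variable {n : ℕ} (S : Finset (Fin n))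

noncomputable def extS (w : {j // j ∈ S} → ℝ) : Fin n → ℝ :=
  fun j => if h : j ∈ S then w ⟨j, h⟩ else 0

lemma extS_apply_mem (w : {j // j ∈ S} → ℝ) (i : {j // j ∈ S}) :
    extS S w i.1 = w i := by
  simp [extS, i.2]

lemma extS_apply_not_mem (w : {j // j ∈ S} → ℝ) {j : Fin n} (hj : j ∉ S) :
    extS S w j = 0 := by
  simp [extS, hj]

lemma resS_extS (w : {j // j ∈ S} → ℝ) :
    (fun i : {j // j ∈ S} => extS S w i.1) = w := by
  funext i; exact extS_apply_mem S w i

lemma extS_sub (a b : {j // j ∈ S} → ℝ) : extS S a - extS S b = extS S (a - b) := by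
  funext j
  by_cases hj : j ∈ S <;> simp [extS, hj]

lemma extS_eq_zero {w : {j // j ∈ S} → ℝ} (h : extS S w = 0) : w = 0 := by
  funext i
  have := congrFun h i.1
  rwa [extS_apply_mem] at this

lemma dot_extS (w : {j // j ∈ S} → ℝ) (v : Fin n → ℝ) :
    extS S w ⬝ᵥ v = ∑ i : {j // j ∈ S}, w i * v i.1 := by
  rw [dotProduct]
  have h1 : ∑ j : Fin n, extS S w j * v j = ∑ j ∈ S, extS S w j * v j := by
    refine (Finset.sum_subset (Finset.subset_univ S) ?_).symm
    intro j _ hj; simp [extS, hj]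
  rw [h1, ← Finset.sum_coe_sort S (fun j => extS S w j * v j)]
  exact Finset.sum_congr rfl fun i _ => by rw [extS_apply_mem]

lemma mulVec_extS (M : Matrix (Fin n) (Fin n) ℝ) (w : {j // j ∈ S} → ℝ) (j : Fin n) :
    (M *ᵥ extS S w) j = ∑ i : {j // j ∈ S}, M j i.1 * w i := by
  rw [mulVec, dotProduct_comm, dot_extS]
  exact Finset.sum_congr rfl fun i _ => mul_comm _ _

lemma extS_dot_mulVec (M : Matrix (Fin n) (Fin n) ℝ) (w w' : {j // j ∈ S} → ℝ) :
    extS S w ⬝ᵥ M *ᵥ extS S w' =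
      w ⬝ᵥ (M.submatrix (Subtype.val : {j // j ∈ S} → Fin n) Subtype.val) *ᵥ w' := by
  rw [dot_extS]
  apply Finset.sum_congr rfl
  intro i _
  rw [mulVec_extS]
  simp [Matrix.mulVec, dotProduct, Matrix.submatrix_apply]

end ext

noncomputable section eig
variable {ι : Type*} [Fintype ι] [DecidableEq ι]

def nE (z : ι → ℝ) : ℝ := ‖(WithLp.equiv 2 (ι → ℝ)).symm z‖

lemma nE_nonneg (z : ι → ℝ) : 0 ≤ nE z := norm_nonneg _

lemma nE_sq (z : ι → ℝ) : nE z ^ 2 = z ⬝ᵥ z := by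
  rw [nE, EuclideanSpace.norm_eq, Real.sq_sqrt (by positivity)]
  simp [dotProduct, sq, Real.norm_eq_abs, abs_mul_abs_self]

lemma nE_sub_le (a b : ι → ℝ) : nE a - nE b ≤ nE (a - b) := by
  have : nE (a - b) = ‖(WithLp.equiv 2 (ι → ℝ)).symm a - (WithLp.equiv 2 (ι → ℝ)).symm b‖ := rfl
  rw [this]
  exact norm_sub_norm_le _ _

lemma comp_abs_le (z : ι → ℝ) (i : ι) : |z i| ≤ nE z := by
  have h1 : z i ^ 2 ≤ nE z ^ 2 := by
    rw [nE_sq, dotProduct]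
    calc z i ^ 2 = z i * z i := sq _
    _ ≤ _ := Finset.single_le_sum (fun j _ => mul_self_nonneg (z j)) (Finset.mem_univ i)
  calc |z i| = Real.sqrt (z i ^ 2) := (Real.sqrt_sq_eq_abs _).symm
  _ ≤ Real.sqrt (nE z ^ 2) := Real.sqrt_le_sqrt h1
  _ = nE z := by rw [Real.sqrt_sq (nE_nonneg z)]

lemma inner_dot (a b : EuclideanSpace ℝ ι) :
    @inner ℝ _ _ a b = (a : ι → ℝ) ⬝ᵥ (b : ι → ℝ) := by
  simp [PiLp.inner_apply, dotProduct, RCLike.inner_apply, mul_comm]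

lemma dot_parseval (b : OrthonormalBasis ι ℝ (EuclideanSpace ℝ ι)) (z w : ι → ℝ) :
    z ⬝ᵥ w = ∑ i, ((b i : ι → ℝ) ⬝ᵥ z) * ((b i : ι → ℝ) ⬝ᵥ w) := by
  have h : ∑ x, (z ⬝ᵥ (b x : ι → ℝ)) * ((b x : ι → ℝ) ⬝ᵥ w) = z ⬝ᵥ w := by
    simpa only [inner_dot, WithLp.equiv_symm_apply, WithLp.ofLp_toLp] using b.sum_inner_mul_inner ((WithLp.equiv 2 (ι → ℝ)).symm z)
      ((WithLp.equiv 2 (ι → ℝ)).symm w)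
  rw [← h]
  exact Finset.sum_congr rfl fun i _ => by rw [dotProduct_comm]

lemma symm_dot' (M : Matrix ι ι ℝ) (hM : M.IsSymm) (a v : ι → ℝ) :
    a ⬝ᵥ M *ᵥ v = (M *ᵥ a) ⬝ᵥ v := by
  rw [dotProduct_mulVec, ← vecMul_transpose, hM.eq]

variable (A : Matrix ι ι ℝ) (hA : A.IsHermitian)

lemma herm_isSymm (hA' : A.IsHermitian) : A.IsSymm := by
  ext i j
  have := congrFun (congrFun hA' i) j
  simpa [Matrix.conjTranspose_apply, Matrix.IsSymm] using this

lemma eig_coord (z : ι → ℝ) (i : ι) :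
    (hA.eigenvectorBasis i : ι → ℝ) ⬝ᵥ (A *ᵥ z) =
      hA.eigenvalues i * ((hA.eigenvectorBasis i : ι → ℝ) ⬝ᵥ z) := by
  have hmv : A *ᵥ (hA.eigenvectorBasis i : ι → ℝ) =
      hA.eigenvalues i • (hA.eigenvectorBasis i : ι → ℝ) := hA.mulVec_eigenvectorBasis i
  rw [symm_dot' A (herm_isSymm A hA), hmv, smul_dotProduct, smul_eq_mul]

lemma quad_form_eig (z : ι → ℝ) :
    z ⬝ᵥ A *ᵥ z = ∑ i, hA.eigenvalues i * ((hA.eigenvectorBasis i : ι → ℝ) ⬝ᵥ z) ^ 2 := by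
  rw [dot_parseval hA.eigenvectorBasis z (A *ᵥ z)]
  exact Finset.sum_congr rfl fun i _ => by rw [eig_coord A hA]; ring

lemma norm_sq_eig (z : ι → ℝ) :
    nE z ^ 2 = ∑ i, ((hA.eigenvectorBasis i : ι → ℝ) ⬝ᵥ z) ^ 2 := by
  rw [nE_sq, dot_parseval hA.eigenvectorBasis z z]
  exact Finset.sum_congr rfl fun i _ => sq ((hA.eigenvectorBasis i : ι → ℝ) ⬝ᵥ z) ▸ rfl

lemma coord_abs_le (b : OrthonormalBasis ι ℝ (EuclideanSpace ℝ ι)) (z : ι → ℝ) (i : ι) :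
    |(b i : ι → ℝ) ⬝ᵥ z| ≤ nE z := by
  have h1 : ((b i : ι → ℝ) ⬝ᵥ z) ^ 2 ≤ nE z ^ 2 := by
    rw [nE_sq, dot_parseval b z z]
    have : ∀ j, 0 ≤ ((b j : ι → ℝ) ⬝ᵥ z) * ((b j : ι → ℝ) ⬝ᵥ z) :=
      fun j => mul_self_nonneg _
    calc ((b i : ι → ℝ) ⬝ᵥ z) ^ 2 = ((b i : ι → ℝ) ⬝ᵥ z) * ((b i : ι → ℝ) ⬝ᵥ z) := sq _
    _ ≤ _ := Finset.single_le_sum (fun j _ => this j) (Finset.mem_univ i)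
  calc |(b i : ι → ℝ) ⬝ᵥ z| = Real.sqrt (((b i : ι → ℝ) ⬝ᵥ z) ^ 2) := (Real.sqrt_sq_eq_abs _).symm
  _ ≤ Real.sqrt (nE z ^ 2) := Real.sqrt_le_sqrt h1
  _ = nE z := by rw [Real.sqrt_sq (nE_nonneg z)]

lemma basis_dot_self (b : OrthonormalBasis ι ℝ (EuclideanSpace ℝ ι)) (i : ι) :
    (b i : ι → ℝ) ⬝ᵥ (b i : ι → ℝ) = 1 := by
  have h := b.orthonormal.1 i
  rw [← inner_dot, real_inner_self_eq_norm_sq, h, one_pow]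

lemma eig_le_opnorm (i : ι) :
    hA.eigenvalues i ≤ ‖Matrix.toEuclideanCLM (𝕜 := ℝ) A‖ := by
  set v := hA.eigenvectorBasis i
  have hv1 : ‖v‖ = 1 := hA.eigenvectorBasis.orthonormal.1 i
  have h1 : hA.eigenvalues i = @inner ℝ _ _ v (Matrix.toEuclideanCLM (𝕜 := ℝ) A v) := by
    have h2 : (Matrix.toEuclideanCLM (𝕜 := ℝ) A v : ι → ℝ) = A *ᵥ (v : ι → ℝ) := rfl
    rw [inner_dot, h2, eig_coord A hA, basis_dot_self, mul_one]
  rw [h1]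
  calc @inner ℝ _ _ v (Matrix.toEuclideanCLM (𝕜 := ℝ) A v)
      ≤ ‖v‖ * ‖Matrix.toEuclideanCLM (𝕜 := ℝ) A v‖ := real_inner_le_norm _ _
  _ ≤ ‖v‖ * (‖Matrix.toEuclideanCLM (𝕜 := ℝ) A‖ * ‖v‖) := by
      apply mul_le_mul_of_nonneg_left (ContinuousLinearMap.le_opNorm _ _) (norm_nonneg _)
  _ = ‖Matrix.toEuclideanCLM (𝕜 := ℝ) A‖ := by rw [hv1]; ring

lemma eigvec_ne_zero (i : ι) : (hA.eigenvectorBasis i : ι → ℝ) ≠ 0 := by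
  intro h
  have := hA.eigenvectorBasis.orthonormal.ne_zero i
  exact this (by ext j; exact congrFun h j)

lemma eig_shift_pos {γ : ℝ} (hpd : (A + γ • (1 : Matrix ι ι ℝ)).PosDef) (i : ι) :
    0 < γ + hA.eigenvalues i := by
  have h := hpd.dotProduct_mulVec_pos (eigvec_ne_zero A hA i)
  rw [star_trivial, add_mulVec, smul_mulVec, one_mulVec, dotProduct_add,
    eig_coord A hA, basis_dot_self hA.eigenvectorBasis, dotProduct_smul, smul_eq_mul,
    basis_dot_self hA.eigenvectorBasis] at h
  linarith

lemma hasEig_of_eigenvalue (i : ι) :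
    Module.End.HasEigenvalue (Matrix.toLin' A) (hA.eigenvalues i) := by
  apply Module.End.hasEigenvalue_of_hasEigenvector (x := (hA.eigenvectorBasis i : ι → ℝ))
  constructor
  · rw [Module.End.mem_eigenspace_iff]
    exact hA.mulVec_eigenvectorBasis i
  · exact eigvec_ne_zero A hA i

end eig
end auxlemmas
set_option maxHeartbeats 4000000 in
/-- Theorem 3.8 (ii): geometric decay of the objective gap with factor
`ρ̄ = γ/(γ + λ₊)`, where `λ₊` is the smallest positive eigenvalue of `Q_SS`,
`S = A_m(x̄)`. -/
theorem ppa_objective_gap_geometric_decay {n : ℕ} (hn : 1 ≤ n)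
    (l u : Fin n → EReal)
    (hl : ∀ j, l j ≠ ⊤) (hu : ∀ j, u j ≠ ⊥) (hlu : ∀ j, l j < u j)
    (Q : Matrix (Fin n) (Fin n) ℝ) (hQ : Q.IsSymm) (r : Fin n → ℝ)
    (γ : ℝ) (hγ : 0 < γ)
    (hpd : (Q + γ • (1 : Matrix (Fin n) (Fin n) ℝ)).PosDef)
    (hbdd : ∃ B : ℝ, ∀ z, inBox l u z → B ≤ qf Q r z)
    (x : ℕ → Fin n → ℝ) (hmem : ∀ k, inBox l u (x k))
    (hppa : ∀ k, ∀ z, inBox l u z →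
      qf Q r (x (k + 1)) + γ / 2 * vnorm (x (k + 1) - x k) ^ 2 ≤
        qf Q r z + γ / 2 * vnorm (z - x k) ^ 2)
    (xbar : Fin n → ℝ) (hxbar : inBox l u xbar)
    (hacc : ∃ φ : ℕ → ℕ, StrictMono φ ∧
      Tendsto (fun i => x (φ i)) atTop (𝓝 xbar))
    (hkkt : kktStrict l u Q r xbar)
    (S : Finset (Fin n))
    (hS : ∀ j, j ∈ S ↔ (l j < (xbar j : EReal) ∧ (xbar j : EReal) < u j))
    (lam : ℝ) (hlam : 0 < lam)
    (heig : Module.End.HasEigenvalue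
      (Matrix.toLin' (Q.submatrix (Subtype.val : {j // j ∈ S} → Fin n)
        Subtype.val)) lam)
    (hmin : ∀ μ : ℝ, 0 < μ →
      Module.End.HasEigenvalue
        (Matrix.toLin' (Q.submatrix (Subtype.val : {j // j ∈ S} → Fin n)
          Subtype.val)) μ → lam ≤ μ) :
    ∃ N : ℕ, ∀ k, N ≤ k →
      qf Q r (x k) - qf Q r xbar ≤
        ‖Matrix.toEuclideanCLM (𝕜 := ℝ)
            (Q.submatrix (Subtype.val : {j // j ∈ S} → Fin n) Subtype.val)‖ *
          (γ / (γ + lam)) ^ (2 * (k - N)) / (2 * (1 - γ / (γ + lam)) ^ 2) *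
          vnorm (x N - x (N + 1)) ^ 2 := by
  classical
  obtain ⟨φ, hφm, hφt⟩ := hacc
  set QS := Q.submatrix (Subtype.val : {j // j ∈ S} → Fin n) Subtype.val with hQSdef
  have hQSh : QS.IsHermitian := by
    ext i j
    simp only [hQSdef, Matrix.conjTranspose_apply, Matrix.submatrix_apply, star_trivial]
    exact hQ.apply i.1 j.1
  set AS := QS + γ • (1 : Matrix {j // j ∈ S} {j // j ∈ S} ℝ) with hASdef
  have hsub : (Q + γ • (1 : Matrix (Fin n) (Fin n) ℝ)).submatrix
      (Subtype.val : {j // j ∈ S} → Fin n) Subtype.val = AS := by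
    ext i j
    simp only [hASdef, hQSdef, Matrix.submatrix_apply, Matrix.add_apply, Matrix.smul_apply,
      Matrix.one_apply, smul_eq_mul, Subtype.ext_iff]
  have hASpd : AS.PosDef := by
    refine Matrix.PosDef.of_dotProduct_mulVec_pos ?_ ?_
    · refine hQSh.add ?_
      ext i j
      by_cases h : i = j
      · simp [Matrix.conjTranspose_apply, Matrix.one_apply, h]
      · simp [Matrix.conjTranspose_apply, Matrix.one_apply, h, Ne.symm h]
    · intro w hw
      have hne : extS S w ≠ 0 := fun h => hw (extS_eq_zero S h)
      have h2 := hpd.dotProduct_mulVec_pos hne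
      rw [star_trivial] at h2 ⊢
      rw [← hsub, ← extS_dot_mulVec]
      exact h2
  have hdet : IsUnit AS.det := (Matrix.isUnit_iff_isUnit_det _).1 hASpd.isUnit
  have hANV : ∀ v, AS *ᵥ (AS⁻¹ *ᵥ v) = v := fun v => by
    rw [Matrix.mulVec_mulVec, Matrix.mul_nonsing_inv _ hdet, Matrix.one_mulVec]
  set μ : {j // j ∈ S} → ℝ := hQSh.eigenvalues with hμdef
  set vb := hQSh.eigenvectorBasis with hvbdef
  set ρ : {j // j ∈ S} → ℝ := fun i => γ / (γ + μ i) with hρdef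
  set CN := ‖Matrix.toEuclideanCLM (𝕜 := ℝ) QS‖ with hCNdef
  set ρb := γ / (γ + lam) with hρbdef
  have hγμ : ∀ i, 0 < γ + μ i := fun i => eig_shift_pos QS hQSh (hASdef ▸ hASpd) i
  have hρpos : ∀ i, 0 < ρ i := fun i => div_pos hγ (hγμ i)
  have hlamle : ∀ i, 0 < μ i → lam ≤ μ i := fun i h =>
    hmin (μ i) h (hasEig_of_eigenvalue QS hQSh i)
  have hγlam : 0 < γ + lam := by linarith
  have hρb0 : 0 < ρb := div_pos hγ hγlam
  have hρb1 : ρb < 1 := by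
    rw [hρbdef, div_lt_one hγlam]; linarith
  have hρleρb : ∀ i, 0 < μ i → ρ i ≤ ρb := by
    intro i hi
    apply div_le_div_of_nonneg_left hγ.le hγlam
    linarith [hlamle i hi]
  have hρle1 : ∀ i, 0 ≤ μ i → ρ i ≤ 1 := by
    intro i hi
    rw [hρdef, div_le_one (hγμ i)]; linarith
  have hρgt1 : ∀ i, μ i < 0 → 1 < ρ i := by
    intro i hi
    rw [hρdef, lt_div_iff₀ (hγμ i)]; linarith
  have hμCN : ∀ i, μ i ≤ CN := fun i => eig_le_opnorm QS hQSh i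
  have hCN0 : 0 ≤ CN := norm_nonneg _
  set g := Q *ᵥ xbar + r with hgdef
  have hgS : ∀ i : {j // j ∈ S}, g i.1 = 0 := fun i => (hkkt i.1).2.1 ((hS i.1).1 i.2)
  have hnotS : ∀ j, j ∉ S → ((xbar j : EReal) = l j ∧ 0 < g j) ∨
      ((xbar j : EReal) = u j ∧ g j < 0) := by
    intro j hj
    have hj' : ¬(l j < (xbar j : EReal) ∧ (xbar j : EReal) < u j) := fun h => hj ((hS j).2 h)
    rcases not_and_or.1 hj' with h | h
    · left
      have heq : (xbar j : EReal) = l j := le_antisymm (not_lt.1 h) (hxbar j).1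
      exact ⟨heq, (hkkt j).1 heq⟩
    · right
      have heq : (xbar j : EReal) = u j := le_antisymm (hxbar j).2 (not_lt.1 h)
      exact ⟨heq, (hkkt j).2.2 heq⟩
  -- the affine map giving the next iterate near xbar
  set wmap : (Fin n → ℝ) → {j // j ∈ S} → ℝ :=
    fun y => γ • (AS⁻¹ *ᵥ fun i => y i.1 - xbar i.1) with hwmapdef
  set Ymap : (Fin n → ℝ) → Fin n → ℝ := fun y => xbar + extS S (wmap y) with hYmapdef
  have hYoff : ∀ y, ∀ j ∉ S, Ymap y j = xbar j := by
    intro y j hj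
    simp [hYmapdef, extS_apply_not_mem S _ hj]
  have hYS : ∀ y (i : {j // j ∈ S}), Ymap y i.1 = xbar i.1 + wmap y i := by
    intro y i
    simp [hYmapdef, extS_apply_mem S _ i]
  have hwbar : wmap xbar = 0 := by
    have : (fun i : {j // j ∈ S} => xbar i.1 - xbar i.1) = (0 : {j // j ∈ S} → ℝ) := by
      funext i; simp
    rw [hwmapdef]; simp only [this, Matrix.mulVec_zero, smul_zero]
  have hYbar : Ymap xbar = xbar := by
    rw [hYmapdef]
    simp only [hwbar]
    have : extS S (0 : {j // j ∈ S} → ℝ) = 0 := by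
      funext j; by_cases hj : j ∈ S <;> simp [extS, hj]
    rw [this, add_zero]
  have hAw : ∀ y, AS *ᵥ wmap y = γ • (fun i : {j // j ∈ S} => y i.1 - xbar i.1) := by
    intro y
    rw [hwmapdef]
    rw [Matrix.mulVec_smul, hANV]
  set Gm : (Fin n → ℝ) → Fin n → ℝ :=
    fun y => Q *ᵥ Ymap y + r + γ • (Ymap y - y) with hGmdef
  have hGbar : Gm xbar = g := by
    rw [hGmdef]; simp only [hYbar, sub_self, smul_zero, add_zero, hgdef]
  have hGS : ∀ y (i : {j // j ∈ S}), Gm y i.1 = 0 := by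
    intro y i
    have h1 : (Q *ᵥ Ymap y) i.1 = (Q *ᵥ xbar) i.1 + (QS *ᵥ wmap y) i := by
      rw [hYmapdef]
      simp only [Matrix.mulVec_add, Pi.add_apply]
      congr 1
      rw [mulVec_extS]
      simp [Matrix.mulVec, dotProduct, hQSdef, Matrix.submatrix_apply]
    have h2 : (AS *ᵥ wmap y) i = γ * (y i.1 - xbar i.1) := by
      rw [hAw y]; simp
    have h3 : (AS *ᵥ wmap y) i = (QS *ᵥ wmap y) i + γ * wmap y i := by
      rw [hASdef]
      simp [Matrix.add_mulVec, Matrix.smul_mulVec, Matrix.one_mulVec]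
    have h4 := hgS i
    have h5 : Gm y i.1 = (Q *ᵥ Ymap y) i.1 + r i.1 + γ * (Ymap y i.1 - y i.1) := by
      simp [hGmdef]
    rw [h5, h1, hYS y i]
    have h6 : (Q *ᵥ xbar) i.1 + r i.1 = 0 := by
      have := h4; simpa [hgdef] using this
    nlinarith [h2, h3, h6]
  -- continuity of the candidate map and its gradient
  have hwcont : ∀ i, Continuous fun y => wmap y i := by
    intro i
    have : (fun y => wmap y i) =
        fun y => γ * ∑ i', AS⁻¹ i i' * (y i'.1 - xbar i'.1) := by
      funext y; simp [hwmapdef, Matrix.mulVec, dotProduct]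
    rw [this]
    exact continuous_const.mul (continuous_finset_sum _ fun i' _ =>
      continuous_const.mul ((continuous_apply i'.1).sub continuous_const))
  have hYcont : ∀ j, Continuous fun y => Ymap y j := by
    intro j
    by_cases hj : j ∈ S
    · have : (fun y => Ymap y j) = fun y => xbar j + wmap y ⟨j, hj⟩ := by
        funext y; exact hYS y ⟨j, hj⟩
      rw [this]
      exact continuous_const.add (hwcont ⟨j, hj⟩)
    · have : (fun y => Ymap y j) = fun _ => xbar j := by
        funext y; exact hYoff y j hj
      rw [this]
      exact continuous_const
  have hGcont : ∀ j, Continuous fun y => Gm y j := by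
    intro j
    have : (fun y => Gm y j) =
        fun y => (∑ j', Q j j' * Ymap y j') + r j + γ * (Ymap y j - y j) := by
      funext y; simp [hGmdef, Matrix.mulVec, dotProduct]
    rw [this]
    refine ((continuous_finset_sum _ fun j' _ =>
      continuous_const.mul (hYcont j')).add continuous_const).add
      (continuous_const.mul ((hYcont j).sub (continuous_apply j)))
  -- the eventual identification package
  have hEa : ∀ᶠ y in 𝓝 xbar, ∀ i : {j // j ∈ S}, l i.1 < ((Ymap y i.1 : ℝ) : EReal) := by
    rw [eventually_all]
    intro i
    have hopen : IsOpen {t : ℝ | l i.1 < (t : EReal)} :=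
      isOpen_Ioi.preimage continuous_coe_real_ereal
    have hmemb : Ymap xbar i.1 ∈ {t : ℝ | l i.1 < (t : EReal)} := by
      rw [hYbar]; exact ((hS i.1).1 i.2).1
    exact (hYcont i.1).continuousAt.eventually_mem (hopen.mem_nhds hmemb)
  have hEb : ∀ᶠ y in 𝓝 xbar, ∀ i : {j // j ∈ S}, ((Ymap y i.1 : ℝ) : EReal) < u i.1 := by
    rw [eventually_all]
    intro i
    have hopen : IsOpen {t : ℝ | (t : EReal) < u i.1} :=
      isOpen_Iio.preimage continuous_coe_real_ereal
    have hmemb : Ymap xbar i.1 ∈ {t : ℝ | (t : EReal) < u i.1} := by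
      rw [hYbar]; exact ((hS i.1).1 i.2).2
    exact (hYcont i.1).continuousAt.eventually_mem (hopen.mem_nhds hmemb)
  have hEc : ∀ᶠ y in 𝓝 xbar, ∀ j, 0 < g j → 0 < Gm y j := by
    rw [eventually_all]
    intro j
    by_cases hgj : 0 < g j
    · have ht : Tendsto (fun y => Gm y j) (𝓝 xbar) (𝓝 (g j)) := by
        have h0 : g j = Gm xbar j := by rw [hGbar]
        rw [h0]
        exact (hGcont j).tendsto xbar
      filter_upwards [ht.eventually_const_lt hgj] with y hy
      exact fun _ => hy
    · exact Filter.Eventually.of_forall fun y h => absurd h hgj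
  have hEd : ∀ᶠ y in 𝓝 xbar, ∀ j, g j < 0 → Gm y j < 0 := by
    rw [eventually_all]
    intro j
    by_cases hgj : g j < 0
    · have ht : Tendsto (fun y => Gm y j) (𝓝 xbar) (𝓝 (g j)) := by
        have h0 : g j = Gm xbar j := by rw [hGbar]
        rw [h0]
        exact (hGcont j).tendsto xbar
      filter_upwards [ht.eventually_lt_const hgj] with y hy
      exact fun _ => hy
    · exact Filter.Eventually.of_forall fun y h => absurd h hgj
  obtain ⟨ε, hε, hball⟩ := Metric.eventually_nhds_iff.1 ((hEa.and hEb).and (hEc.and hEd))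
  -- identification: near xbar the candidate satisfies box and optimality conditions
  have hident : ∀ y, dist y xbar < ε → inBox l u (Ymap y) ∧
      ∀ z, inBox l u z → 0 ≤ Gm y ⬝ᵥ (z - Ymap y) := by
    intro y hy
    obtain ⟨⟨ha, hb⟩, hc, hd⟩ := hball hy
    constructor
    · intro j
      by_cases hj : j ∈ S
      · exact ⟨le_of_lt (ha ⟨j, hj⟩), le_of_lt (hb ⟨j, hj⟩)⟩
      · rw [hYoff y j hj]; exact hxbar j
    · intro z hz
      rw [dotProduct]
      apply Finset.sum_nonneg
      intro j _
      by_cases hj : j ∈ S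
      · rw [hGS y ⟨j, hj⟩]; simp
      · rcases hnotS j hj with ⟨heq, hgj⟩ | ⟨heq, hgj⟩
        · have h1 : 0 < Gm y j := hc j hgj
          have h2 : xbar j ≤ z j := by
            have := (hz j).1
            rw [← heq] at this
            exact_mod_cast this
          have hsub2 : (z - Ymap y) j = z j - xbar j := by
            rw [Pi.sub_apply, hYoff y j hj]
          rw [hsub2]
          nlinarith
        · have h1 : Gm y j < 0 := hd j hgj
          have h2 : z j ≤ xbar j := by
            have := (hz j).2
            rw [← heq] at this
            exact_mod_cast this
          have hsub2 : (z - Ymap y) j = z j - xbar j := by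
            rw [Pi.sub_apply, hYoff y j hj]
          rw [hsub2]
          nlinarith
  -- near xbar, the PPA step is exactly the affine map Ymap
  have hstep : ∀ k, dist (x k) xbar < ε → x (k + 1) = Ymap (x k) := by
    intro k hk
    obtain ⟨hbox, hsign⟩ := hident (x k) hk
    have h1 := hppa k (Ymap (x k)) hbox
    have h2 := prox_diff hQ r γ (x k) (Ymap (x k)) (x (k + 1))
    have h3 := hsign (x (k + 1)) (hmem (k + 1))
    have hGmform : Gm (x k) = Q *ᵥ Ymap (x k) + r + γ • (Ymap (x k) - x k) := rfl
    rw [← hGmform] at h2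
    have h4 : (x (k + 1) - Ymap (x k)) ⬝ᵥ
        (Q + γ • (1 : Matrix (Fin n) (Fin n) ℝ)) *ᵥ (x (k + 1) - Ymap (x k)) ≤ 0 := by
      nlinarith [h1, h2, h3]
    have h5 : x (k + 1) - Ymap (x k) = 0 := by
      by_contra hne
      have := hpd.dotProduct_mulVec_pos hne
      rw [star_trivial] at this
      linarith
    exact sub_eq_zero.1 h5
  -- monotonicity of the objective along the PPA sequence
  have hqmono : ∀ k, qf Q r (x (k + 1)) ≤ qf Q r (x k) := by
    intro k
    have h1 := hppa k (x k) (hmem k)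
    have h2 : x k - x k = 0 := sub_self _
    rw [h2, vnorm_zero] at h1
    nlinarith [vnorm_nonneg (x (k + 1) - x k), sq_nonneg (vnorm (x (k + 1) - x k))]
  have hqmono' : ∀ k k', k ≤ k' → qf Q r (x k') ≤ qf Q r (x k) := by
    intro k k' hkk
    induction k' with
    | zero =>
      have h0 : k = 0 := Nat.le_zero.1 hkk
      rw [h0]
    | succ m ih =>
      rcases Nat.lt_or_ge k (m+1) with h | h
      · exact le_trans (hqmono m) (ih (Nat.lt_succ_iff.1 h))
      · have : k = m + 1 := le_antisymm hkk h
        rw [this]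
  have hqlim : Tendsto (fun i => qf Q r (x (φ i))) atTop (𝓝 (qf Q r xbar)) :=
    ((qf_continuous Q r).tendsto xbar).comp hφt
  have hqge : ∀ k, qf Q r xbar ≤ qf Q r (x k) := by
    intro k
    apply le_of_tendsto hqlim
    filter_upwards [eventually_ge_atTop k] with i hi
    exact hqmono' k (φ i) (le_trans hi (hφm.le_apply))
  -- choice of the entering radius δ
  set negs : Finset {j // j ∈ S} := Finset.univ.filter (fun i => μ i < 0) with hnegsdef
  set μ0 : ℝ := if h : negs.Nonempty then negs.inf' h (fun i => -μ i) else 1 with hμ0def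
  have hμ0pos : 0 < μ0 := by
    rw [hμ0def]
    split
    · rename_i h
      rw [Finset.lt_inf'_iff]
      intro i hi
      rw [hnegsdef, Finset.mem_filter] at hi
      linarith [hi.2]
    · exact one_pos
  have hμ0le : ∀ i, μ i < 0 → μ i ≤ -μ0 := by
    intro i hi
    have hmemi : i ∈ negs := by rw [hnegsdef, Finset.mem_filter]; exact ⟨Finset.mem_univ i, hi⟩
    have hne : negs.Nonempty := ⟨i, hmemi⟩
    have h1 : μ0 ≤ -μ i := by
      rw [hμ0def, dif_pos hne]
      exact Finset.inf'_le _ hmemi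
    linarith
  set δ : ℝ := ε * Real.sqrt (μ0 / (CN + μ0 + 1)) with hδdef
  have hD : (0:ℝ) < CN + μ0 + 1 := by linarith
  have hδpos : 0 < δ :=
    mul_pos hε (Real.sqrt_pos.2 (div_pos hμ0pos hD))
  have hδsq : δ ^ 2 = ε ^ 2 * (μ0 / (CN + μ0 + 1)) := by
    rw [hδdef, mul_pow, Real.sq_sqrt (le_of_lt (div_pos hμ0pos hD))]
  have hkey : (CN + μ0) * δ ^ 2 < μ0 * ε ^ 2 := by
    have h1 : δ ^ 2 * (CN + μ0 + 1) = ε ^ 2 * μ0 := by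
      rw [hδsq]; field_simp
    nlinarith [pow_pos hδpos 2]
  have hδε : δ < ε := by
    have h2 : μ0 * δ ^ 2 < μ0 * ε ^ 2 := by nlinarith [pow_pos hδpos 2]
    have h3 : δ ^ 2 < ε ^ 2 := by
      have := (mul_lt_mul_iff_right₀ hμ0pos).1 h2
      exact this
    exact lt_of_pow_lt_pow_left₀ 2 hε.le h3
  -- second eventual package
  have hE2 : ∀ᶠ y in 𝓝 xbar, nE (wmap y) < δ := by
    have hcont : Continuous fun y => nE (wmap y) := by
      have h1 : Continuous fun y => wmap y := continuous_pi hwcont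
      exact ((PiLp.continuous_toLp ..).comp h1).norm
    have h0 : nE (wmap xbar) = 0 := by
      rw [hwbar]
      show ‖(0 : EuclideanSpace ℝ {j // j ∈ S})‖ = 0
      exact norm_zero
    have ht : Tendsto (fun y => nE (wmap y)) (𝓝 xbar) (𝓝 0) := by
      rw [← h0]
      exact hcont.tendsto xbar
    exact ht.eventually_lt_const hδpos
  have hEdist : ∀ᶠ y in 𝓝 xbar, dist y xbar < ε :=
    Metric.eventually_nhds_iff.2 ⟨ε, hε, fun y hy => hy⟩
  obtain ⟨ε₂, hε₂, hball2⟩ := Metric.eventually_nhds_iff.1 (hE2.and hEdist)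
  -- entering time
  obtain ⟨T, hT⟩ := (Metric.tendsto_atTop.1 hφt) ε₂ hε₂
  set K0 := φ T with hK0def
  have hK0 : dist (x K0) xbar < ε₂ := hT T le_rfl
  set K := K0 + 1 with hKdef
  have hxK : x K = Ymap (x K0) := hstep K0 (hball2 hK0).2
  -- difference variables and eigen-coordinates
  set W : ℕ → {j // j ∈ S} → ℝ := fun k i => x k i.1 - xbar i.1 with hWdef
  set c : ℕ → {j // j ∈ S} → ℝ := fun k i => (vb i : {j // j ∈ S} → ℝ) ⬝ᵥ W k with hcdef
  have hform : ∀ k', x (k' + 1) = Ymap (x k') →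
      (x (k' + 1) - xbar = extS S (W (k' + 1))) ∧ W (k' + 1) = wmap (x k') := by
    intro k' hk'
    have h1 : x (k' + 1) - xbar = extS S (wmap (x k')) := by
      rw [hk', hYmapdef]
      exact add_sub_cancel_left xbar _
    have h2 : W (k' + 1) = wmap (x k') := by
      funext i
      have h3 := congrFun h1 i.1
      rw [Pi.sub_apply] at h3
      rw [hWdef]
      simp only []
      rw [h3, extS_apply_mem]
    exact ⟨by rw [h2]; exact h1, h2⟩
  have hsuppK : x K - xbar = extS S (W K) := (hform K0 hxK).1
  have hWKδ : nE (W K) < δ := by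
    rw [(hform K0 hxK).2]
    exact (hball2 hK0).1
  -- one recursion step
  have hdistball : ∀ k, x k - xbar = extS S (W k) → nE (W k) < ε → dist (x k) xbar < ε := by
    intro k hsupp hlt
    rw [dist_pi_lt_iff hε]
    intro j
    rw [Real.dist_eq]
    have h1 : x k j - xbar j = extS S (W k) j := by
      have := congrFun hsupp j
      rwa [Pi.sub_apply] at this
    by_cases hj : j ∈ S
    · rw [h1, extS_apply_mem S _ ⟨j, hj⟩]
      exact lt_of_le_of_lt (comp_abs_le (W k) ⟨j, hj⟩) hlt
    · rw [h1, extS_apply_not_mem S _ hj, abs_zero]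
      exact hε
  have hrec : ∀ k, x k - xbar = extS S (W k) → nE (W k) < ε →
      (x (k + 1) - xbar = extS S (W (k + 1))) ∧
        ∀ i, (γ + μ i) * c (k + 1) i = γ * c k i := by
    intro k hsupp hlt
    have hx1 : x (k + 1) = Ymap (x k) := hstep k (hdistball k hsupp hlt)
    obtain ⟨h1, h2⟩ := hform k hx1
    refine ⟨h1, ?_⟩
    intro i
    have h3 : AS *ᵥ wmap (x k) = γ • W k := hAw (x k)
    have h4 : (vb i : {j // j ∈ S} → ℝ) ⬝ᵥ (AS *ᵥ wmap (x k)) =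
        (μ i + γ) * ((vb i : {j // j ∈ S} → ℝ) ⬝ᵥ wmap (x k)) := by
      rw [hASdef, Matrix.add_mulVec, Matrix.smul_mulVec, Matrix.one_mulVec,
        dotProduct_add, dotProduct_smul, smul_eq_mul]
      have h5 : (vb i : {j // j ∈ S} → ℝ) ⬝ᵥ (QS *ᵥ wmap (x k)) =
          μ i * ((vb i : {j // j ∈ S} → ℝ) ⬝ᵥ wmap (x k)) := eig_coord QS hQSh _ i
      rw [h5]; ring
    have h6 : (vb i : {j // j ∈ S} → ℝ) ⬝ᵥ (γ • W k) = γ * c k i := by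
      rw [dotProduct_smul, smul_eq_mul, hcdef]
    rw [h3, h6] at h4
    rw [hcdef]
    simp only []
    rw [h2]
    linarith [h4]
  -- the quadratic gap formula
  have hgapf : ∀ k, x k - xbar = extS S (W k) →
      qf Q r (x k) - qf Q r xbar = (1/2) * ∑ i, μ i * (c k i) ^ 2 := by
    intro k hsupp
    have hxk : x k = xbar + extS S (W k) := by
      rw [← hsupp]; abel
    rw [hxk, qf_add hQ r xbar (extS S (W k))]
    have h1 : (Q *ᵥ xbar + r) ⬝ᵥ extS S (W k) = 0 := by
      rw [dotProduct_comm, dot_extS]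
      apply Finset.sum_eq_zero
      intro i _
      rw [← hgdef, hgS i, mul_zero]
    have h2 : extS S (W k) ⬝ᵥ Q *ᵥ extS S (W k) = ∑ i, μ i * (c k i) ^ 2 := by
      rw [extS_dot_mulVec, ← hQSdef, quad_form_eig QS hQSh]
    rw [h1, h2]; ring
  have hnormf : ∀ k, nE (W k) ^ 2 = ∑ i, (c k i) ^ 2 := fun k =>
    norm_sq_eig QS hQSh (W k)
  -- no exit from the ball
  have hnoexit : ∀ k, K ≤ k → (∀ i, c k i = ρ i ^ (k - K) * c K i) →
      (x k - xbar = extS S (W k)) → nE (W k) < ε := by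
    intro k hK hc hsupp
    by_contra hge'
    have hge : ε ≤ nE (W k) := not_lt.1 hge'
    have hsplit1 : ∑ i, (c k i) ^ 2 =
        ∑ i ∈ negs, (c k i) ^ 2 + ∑ i ∈ Finset.univ.filter (fun i => ¬ μ i < 0), (c k i) ^ 2 := by
      rw [hnegsdef]
      exact (Finset.sum_filter_add_sum_filter_not Finset.univ _ _).symm
    have hsplit2 : ∑ i, μ i * (c k i) ^ 2 =
        ∑ i ∈ negs, μ i * (c k i) ^ 2 +
          ∑ i ∈ Finset.univ.filter (fun i => ¬ μ i < 0), μ i * (c k i) ^ 2 := by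
      rw [hnegsdef]
      exact (Finset.sum_filter_add_sum_filter_not Finset.univ _ _).symm
    have hKsq : nE (W K) ^ 2 ≤ δ ^ 2 := by
      nlinarith [nE_nonneg (W K), hWKδ]
    have hb3 : ∑ i ∈ Finset.univ.filter (fun i => ¬ μ i < 0), (c k i) ^ 2 ≤ δ ^ 2 := by
      have hstep1 : ∑ i ∈ Finset.univ.filter (fun i => ¬ μ i < 0), (c k i) ^ 2 ≤
          ∑ i ∈ Finset.univ.filter (fun i => ¬ μ i < 0), (c K i) ^ 2 := by
        apply Finset.sum_le_sum
        intro i hi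
        rw [Finset.mem_filter] at hi
        have hmu : 0 ≤ μ i := not_lt.1 hi.2
        rw [hc i, mul_pow]
        have h1 : (ρ i ^ (k - K)) ^ 2 ≤ 1 := by
          apply pow_le_one₀ (pow_nonneg (hρpos i).le _)
          exact pow_le_one₀ (hρpos i).le (hρle1 i hmu)
        nlinarith [sq_nonneg (c K i), h1, pow_nonneg (pow_nonneg (hρpos i).le (k-K)) 2]
      have hstep2 : ∑ i ∈ Finset.univ.filter (fun i => ¬ μ i < 0), (c K i) ^ 2 ≤
          ∑ i, (c K i) ^ 2 :=
        Finset.sum_le_sum_of_subset_of_nonneg (Finset.filter_subset _ _)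
          (fun i _ _ => sq_nonneg _)
      rw [← hnormf K] at hstep2
      linarith
    have hb4 : ε ^ 2 ≤ ∑ i, (c k i) ^ 2 := by
      rw [← hnormf k]
      nlinarith [hε, hge]
    have hbneg : ∑ i ∈ negs, μ i * (c k i) ^ 2 ≤ -μ0 * ∑ i ∈ negs, (c k i) ^ 2 := by
      rw [Finset.mul_sum]
      apply Finset.sum_le_sum
      intro i hi
      rw [hnegsdef, Finset.mem_filter] at hi
      exact mul_le_mul_of_nonneg_right (hμ0le i hi.2) (sq_nonneg _)
    have hbpos : ∑ i ∈ Finset.univ.filter (fun i => ¬ μ i < 0), μ i * (c k i) ^ 2 ≤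
        CN * δ ^ 2 := by
      have h1 : ∑ i ∈ Finset.univ.filter (fun i => ¬ μ i < 0), μ i * (c k i) ^ 2 ≤
          ∑ i ∈ Finset.univ.filter (fun i => ¬ μ i < 0), CN * (c k i) ^ 2 := by
        apply Finset.sum_le_sum
        intro i _
        exact mul_le_mul_of_nonneg_right (hμCN i) (sq_nonneg _)
      have h2 : ∑ i ∈ Finset.univ.filter (fun i => ¬ μ i < 0), CN * (c k i) ^ 2 =
          CN * ∑ i ∈ Finset.univ.filter (fun i => ¬ μ i < 0), (c k i) ^ 2 := by
        rw [Finset.mul_sum]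
      rw [h2] at h1
      calc ∑ i ∈ Finset.univ.filter (fun i => ¬ μ i < 0), μ i * (c k i) ^ 2 ≤
          CN * ∑ i ∈ Finset.univ.filter (fun i => ¬ μ i < 0), (c k i) ^ 2 := h1
      _ ≤ CN * δ ^ 2 := mul_le_mul_of_nonneg_left hb3 hCN0
    have hgap0 : 0 ≤ ∑ i, μ i * (c k i) ^ 2 := by
      have := hqge k
      have h1 := hgapf k hsupp
      linarith
    have hSneg : ε ^ 2 - δ ^ 2 ≤ ∑ i ∈ negs, (c k i) ^ 2 := by
      rw [hsplit1] at hb4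
      linarith
    have hfin : μ0 * (ε ^ 2 - δ ^ 2) ≤ CN * δ ^ 2 := by
      rw [hsplit2] at hgap0
      nlinarith [hSneg, hbneg, hbpos, hμ0pos]
    nlinarith [hkey]
  -- the invariant along the whole tail
  have hP : ∀ k, K ≤ k → (x k - xbar = extS S (W k)) ∧
      (∀ i, c k i = ρ i ^ (k - K) * c K i) ∧ nE (W k) < ε := by
    intro k hk
    induction k, hk using Nat.le_induction with
    | base =>
      refine ⟨hsuppK, fun i => ?_, lt_trans hWKδ hδε⟩
      rw [Nat.sub_self, pow_zero, one_mul]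
    | succ k hk ih =>
      obtain ⟨h1, h2, h3⟩ := ih
      obtain ⟨h4, h5⟩ := hrec k h1 h3
      have hc' : ∀ i, c (k + 1) i = ρ i ^ (k + 1 - K) * c K i := by
        intro i
        have h6 := h5 i
        have h7 : c (k + 1) i = ρ i * c k i := by
          have hne : γ + μ i ≠ 0 := ne_of_gt (hγμ i)
          rw [hρdef]
          field_simp
          linear_combination h6
        have hpow : k + 1 - K = (k - K) + 1 := by omega
        rw [h7, h2 i, hpow, pow_succ]
        ring
      exact ⟨h4, hc', hnoexit (k + 1) (by omega) hc' h4⟩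
  -- nonpositive-eigenvalue coordinates vanish
  have hvanish : ∀ i, μ i ≤ 0 → c K i = 0 := by
    intro i hi
    rcases lt_or_eq_of_le hi with hlt | heq0
    · by_contra hne
      have habs : 0 < |c K i| := abs_pos.2 hne
      obtain ⟨m, hm⟩ := pow_unbounded_of_one_lt (ε / |c K i|) (hρgt1 i hlt)
      have hk : K ≤ K + m := Nat.le_add_right _ _
      have h1 : c (K + m) i = ρ i ^ m * c K i := by
        have := (hP (K + m) hk).2.1 i
        rwa [Nat.add_sub_cancel_left] at this
      have h2 : |c (K + m) i| = ρ i ^ m * |c K i| := by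
        rw [h1, abs_mul, abs_of_pos (pow_pos (hρpos i) m)]
      have h3 : ε < ρ i ^ m * |c K i| := by
        rw [div_lt_iff₀ habs] at hm
        linarith
      have h4 : |c (K + m) i| ≤ nE (W (K + m)) := coord_abs_le vb (W (K + m)) i
      have h5 := (hP (K + m) hk).2.2
      rw [h2] at h4
      linarith
    · have hρ1 : ρ i = 1 := by
        have hre : ρ i = γ / (γ + μ i) := rfl
        rw [hre, heq0, add_zero]
        exact div_self (ne_of_gt hγ)
      have hconst : ∀ k, K ≤ k → c k i = c K i := by
        intro k hk
        rw [(hP k hk).2.1 i, hρ1, one_pow, one_mul]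
      set F : (Fin n → ℝ) → ℝ :=
        fun y => (vb i : {j // j ∈ S} → ℝ) ⬝ᵥ (fun i' => y i'.1 - xbar i'.1) with hFdef
      have hFcont : Continuous F := by
        have : F = fun y => ∑ i', (vb i : {j // j ∈ S} → ℝ) i' * (y i'.1 - xbar i'.1) := by
          funext y; rw [hFdef]; rfl
        rw [this]
        exact continuous_finset_sum _ fun i' _ =>
          continuous_const.mul ((continuous_apply i'.1).sub continuous_const)
      have hF0 : F xbar = 0 := by
        rw [hFdef]
        simp only []
        have : (fun i' : {j // j ∈ S} => xbar i'.1 - xbar i'.1) = (0 : {j // j ∈ S} → ℝ) := by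
          funext i'; simp
        rw [this, dotProduct_zero]
      have h1 : Tendsto (fun t => F (x (φ t))) atTop (𝓝 0) := by
        rw [← hF0]
        exact (hFcont.tendsto xbar).comp hφt
      have h2 : (fun t => F (x (φ t))) =ᶠ[atTop] fun _ => c K i := by
        filter_upwards [eventually_ge_atTop K] with t ht
        have hφK : K ≤ φ t := le_trans ht hφm.le_apply
        have : F (x (φ t)) = c (φ t) i := rfl
        rw [this, hconst (φ t) hφK]
      have h3 : Tendsto (fun _ : ℕ => c K i) atTop (𝓝 0) := h1.congr' h2
      exact (tendsto_nhds_unique h3 tendsto_const_nhds).symm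
  -- geometric decay of the distance
  have hdecay : ∀ k, K ≤ k → nE (W k) ^ 2 ≤ (ρb ^ (k - K)) ^ 2 * nE (W K) ^ 2 := by
    intro k hk
    rw [hnormf, hnormf]
    have h1 : ∀ i, (c k i) ^ 2 ≤ (ρb ^ (k - K)) ^ 2 * (c K i) ^ 2 := by
      intro i
      rw [(hP k hk).2.1 i, mul_pow]
      by_cases hi : μ i ≤ 0
      · rw [hvanish i hi]
        simp
      · push_neg at hi
        have h2 : ρ i ^ (k - K) ≤ ρb ^ (k - K) :=
          pow_le_pow_left₀ (hρpos i).le (hρleρb i hi) _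
        have h3 : (ρ i ^ (k - K)) ^ 2 ≤ (ρb ^ (k - K)) ^ 2 := by
          nlinarith [pow_nonneg (hρpos i).le (k - K), pow_nonneg hρb0.le (k - K)]
        exact mul_le_mul_of_nonneg_right h3 (sq_nonneg _)
    calc ∑ i, (c k i) ^ 2 ≤ ∑ i, (ρb ^ (k - K)) ^ 2 * (c K i) ^ 2 :=
      Finset.sum_le_sum fun i _ => h1 i
    _ = (ρb ^ (k - K)) ^ 2 * ∑ i, (c K i) ^ 2 := by rw [Finset.mul_sum]
  have hstep1 : nE (W (K + 1)) ≤ ρb * nE (W K) := by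
    have h1 := hdecay (K + 1) (Nat.le_add_right _ _)
    have h0 : K + 1 - K = 1 := by omega
    rw [h0, pow_one] at h1
    have h3 : nE (W (K + 1)) ^ 2 ≤ (ρb * nE (W K)) ^ 2 := by nlinarith [h1]
    have h4 : 0 ≤ ρb * nE (W K) := mul_nonneg hρb0.le (nE_nonneg _)
    calc nE (W (K + 1)) = Real.sqrt (nE (W (K + 1)) ^ 2) :=
      (Real.sqrt_sq (nE_nonneg _)).symm
    _ ≤ Real.sqrt ((ρb * nE (W K)) ^ 2) := Real.sqrt_le_sqrt h3
    _ = ρb * nE (W K) := Real.sqrt_sq h4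
  -- relating the initial distance to the first step
  have hvnormext : ∀ v : {j // j ∈ S} → ℝ, vnorm (extS S v) = nE v := by
    intro v
    have h1 : extS S v ⬝ᵥ extS S v = v ⬝ᵥ v := by
      rw [dot_extS]
      apply Finset.sum_congr rfl
      intro i _
      rw [extS_apply_mem]
    rw [vnorm, h1]
    have h2 : nE v = Real.sqrt (nE v ^ 2) := (Real.sqrt_sq (nE_nonneg v)).symm
    rw [h2, nE_sq]
  have hlow : (1 - ρb) * nE (W K) ≤ vnorm (x K - x (K + 1)) := by
    have h1 : x K - x (K + 1) = extS S (W K - W (K + 1)) := by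
      have h2 : x K - x (K + 1) = (x K - xbar) - (x (K + 1) - xbar) := by abel
      rw [h2, (hP K le_rfl).1, (hP (K + 1) (Nat.le_add_right _ _)).1, extS_sub]
    rw [h1, hvnormext]
    have h3 := nE_sub_le (W K) (W (K + 1))
    linarith [hstep1, h3]
  -- final assembly
  refine ⟨K, fun k hk => ?_⟩
  rw [hgapf k (hP k hk).1]
  have h1 : ∑ i, μ i * (c k i) ^ 2 ≤ CN * ∑ i, (c k i) ^ 2 := by
    rw [Finset.mul_sum]
    exact Finset.sum_le_sum fun i _ =>
      mul_le_mul_of_nonneg_right (hμCN i) (sq_nonneg _)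
  have h2 := hdecay k hk
  have h0ρ : (0:ℝ) ≤ 1 - ρb := by linarith
  have h1ρ : (0:ℝ) < 1 - ρb := by linarith
  have h4 : ((1 - ρb) * nE (W K)) ^ 2 ≤ vnorm (x K - x (K + 1)) ^ 2 :=
    pow_le_pow_left₀ (mul_nonneg h0ρ (nE_nonneg _)) hlow 2
  have h3 : (1 - ρb) ^ 2 * nE (W K) ^ 2 ≤ vnorm (x K - x (K + 1)) ^ 2 := by
    have hr : ((1 - ρb) * nE (W K)) ^ 2 = (1 - ρb) ^ 2 * nE (W K) ^ 2 := by ring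
    rw [hr] at h4
    exact h4
  have hpowid : ρb ^ (2 * (k - K)) = (ρb ^ (k - K)) ^ 2 := by
    rw [mul_comm 2 (k - K), pow_mul]
  have hP2 : (0:ℝ) ≤ (ρb ^ (k - K)) ^ 2 := sq_nonneg _
  rw [← hnormf k] at h1
  have h5 : CN * nE (W k) ^ 2 ≤ CN * ((ρb ^ (k - K)) ^ 2 * nE (W K) ^ 2) :=
    mul_le_mul_of_nonneg_left h2 hCN0
  have hDpos : (0:ℝ) < 2 * (1 - ρb) ^ 2 := mul_pos two_pos (pow_pos h1ρ 2)
  have hquot : (0:ℝ) ≤ CN * (ρb ^ (k - K)) ^ 2 / (2 * (1 - ρb) ^ 2) :=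
    div_nonneg (mul_nonneg hCN0 hP2) hDpos.le
  have h6 : CN * (ρb ^ (k - K)) ^ 2 / (2 * (1 - ρb) ^ 2) *
      ((1 - ρb) ^ 2 * nE (W K) ^ 2) =
      (1/2) * (CN * ((ρb ^ (k - K)) ^ 2 * nE (W K) ^ 2)) := by
    rw [div_mul_eq_mul_div, div_eq_iff (ne_of_gt hDpos)]
    ring
  have h7 : CN * (ρb ^ (k - K)) ^ 2 / (2 * (1 - ρb) ^ 2) *
      ((1 - ρb) ^ 2 * nE (W K) ^ 2) ≤
      CN * (ρb ^ (k - K)) ^ 2 / (2 * (1 - ρb) ^ 2) * vnorm (x K - x (K + 1)) ^ 2 :=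
    mul_le_mul_of_nonneg_left h3 hquot
  have h8 : CN * ρb ^ (2 * (k - K)) / (2 * (1 - ρb) ^ 2) * vnorm (x K - x (K + 1)) ^ 2 =
      CN * (ρb ^ (k - K)) ^ 2 / (2 * (1 - ρb) ^ 2) * vnorm (x K - x (K + 1)) ^ 2 := by
    rw [hpowid]
  rw [h8]
  linarith [h1, h5, h6, h7]
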